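/- Let (α, λ) be a scaled trace-self-dual basis of K = F_{q^{2m}} over F_q, let s be a positive integer with gcd(s, 2m) = 1, and let 1 ≤ k ≤ m. Then the generalized Gabidulin code G_{k,s}(α) ⊆ K^{2m}, spanned over K by the rows α^{q^{is}} = (α₁^{q^{is}},…,α_{2m}^{q^{is}}) for i = 0,…,k−1, is Hermitian self-orthogonal: G_{k,s}(α) ⊆ G_{k,s}(α)^{⊥_H}. -/

import Mathlib

/-- Hermitian (σ-twisted) dual of a code `C ⊆ K^n`, where σ = (x ↦ x^e). -/
noncomputable def hermDual {K : Type*} [Field K] (n e : ℕ) (C : Submodule K (Fin n → K)) :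
    Submodule K (Fin n → K) :=
  ⨅ c ∈ C, LinearMap.ker (∑ i : Fin n, (c i ^ e) • (LinearMap.proj i : (Fin n → K) →ₗ[K] K))

/-! The rows of `G_{k,s}(α)` are the Galois conjugates `φ^{is}(α)` of `α` under the Frobenius
`φ : x ↦ x^q`, and `σ = φ^m`. Trace duality of `(α, λα)` says that the Moore-type matrices
`(τ(λα_t))_{t,τ}` and `(τ(α_t))_{τ,t}` are mutually inverse, so `∑_t τ₁(α_t) τ₂(α_t) = 0`
whenever `τ₁ ≠ τ₂`. Hence `⟨α^{q^{js}}, α^{q^{is}}⟩_H` vanishes unless `js + m ≡ is (mod 2m)`,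
which `gcd(s, 2m) = 1` and `i, j < m` rule out. -/

open Module Finset

theorem mem_hermDual_iff {K : Type*} [Field K] {n e : ℕ} {C : Submodule K (Fin n → K)}
    {x : Fin n → K} : x ∈ hermDual n e C ↔ ∀ c ∈ C, ∑ i, c i ^ e * x i = 0 := by
  simp [hermDual]

theorem span_le_hermDual_span {K : Type*} [Field K] {n e : ℕ} (σ : K →+* K)
    (hσ : ∀ x, σ x = x ^ e) {S : Set (Fin n → K)}
    (hS : ∀ u ∈ S, ∀ v ∈ S, ∑ i, u i ^ e * v i = 0) :
    Submodule.span K S ≤ hermDual n e (Submodule.span K S) := by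
  refine Submodule.span_le.2 fun v hv => mem_hermDual_iff.2 ?_
  let pairing : (Fin n → K) →ₛₗ[σ] K :=
    { toFun := fun c => ∑ i, σ (c i) * v i
      map_add' := fun c d => by simp [add_mul, sum_add_distrib]
      map_smul' := fun a c => by simp [mul_sum, mul_assoc] }
  have hker : Submodule.span K S ≤ LinearMap.ker pairing :=
    Submodule.span_le.2 fun u hu => by simpa [pairing, hσ] using hS u hu v hv
  intro c hc
  simpa [pairing, hσ] using hker hc

theorem sum_apply_mul_eq_zero_of_trace_mul_eq_ite {F K ι : Type*} [Field F] [Field K]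
    [Algebra F K] [FiniteDimensional F K] [IsGalois F K] [Fintype ι] [DecidableEq ι]
    (hι : Fintype.card ι = finrank F K) {b c : ι → K}
    (hbc : ∀ i j, Algebra.trace F K (c i * b j) = if i = j then 1 else 0) {τ : Gal(K/F)}
    (hτ : τ ≠ 1) : ∑ t, τ (b t) * c t = 0 := by
  classical
  let M : Matrix Gal(K/F) ι K := Matrix.of fun τ t => τ (b t)
  let N : Matrix ι Gal(K/F) K := Matrix.of fun t τ => τ (c t)
  have hNM : N * M = 1 := by
    ext i j
    simp only [Matrix.mul_apply, N, M, Matrix.of_apply, ← map_mul,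
      ← trace_eq_sum_automorphisms, hbc, Matrix.one_apply]
    split_ifs <;> simp
  have hcard : Fintype.card ι = Fintype.card Gal(K/F) := by
    rw [hι, ← IsGalois.card_aut_eq_finrank, Nat.card_eq_fintype_card]
  have hMN : M * N = 1 := (Matrix.mul_eq_one_comm_of_equiv (Fintype.equivOfCardEq hcard)).1 hNM
  simpa [Matrix.mul_apply, M, N, Matrix.one_apply, hτ] using congrFun (congrFun hMN τ) 1

theorem sum_apply_mul_apply_eq_zero_of_ne {F K ι : Type*} [Field F] [Field K]
    [Algebra F K] [FiniteDimensional F K] [IsGalois F K] [Fintype ι] [DecidableEq ι]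
    (hι : Fintype.card ι = finrank F K) {b : ι → K} {l : K} (hl : l ≠ 0)
    (hb : ∀ i j, Algebra.trace F K (l * b i * b j) = if i = j then 1 else 0)
    {τ₁ τ₂ : Gal(K/F)} (h : τ₁ ≠ τ₂) : ∑ t, τ₁ (b t) * τ₂ (b t) = 0 := by
  have hτ : τ₂⁻¹ * τ₁ ≠ 1 := by rwa [Ne, inv_mul_eq_one, eq_comm]
  have h0 : ∑ t, (τ₂⁻¹ * τ₁) (b t) * b t = 0 := by
    have := sum_apply_mul_eq_zero_of_trace_mul_eq_ite hι (c := fun t => l * b t) hb hτ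
    simp_rw [mul_left_comm _ l, ← mul_sum] at this
    exact (mul_eq_zero.1 this).resolve_left hl
  simpa [map_sum, AlgEquiv.aut_inv] using congrArg τ₂ h0

theorem FiniteField.sum_pow_mul_pow_eq_zero_of_not_modEq {F K ι : Type*} [Field F] [Fintype F]
    [Field K] [Finite K] [Algebra F K] [Fintype ι] [DecidableEq ι]
    (hι : Fintype.card ι = finrank F K) {b : ι → K} {l : K} (hl : l ≠ 0)
    (hb : ∀ i j, Algebra.trace F K (l * b i * b j) = if i = j then 1 else 0)
    {a c : ℕ} (hac : ¬ a ≡ c [MOD finrank F K]) :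
    ∑ t, b t ^ Fintype.card F ^ a * b t ^ Fintype.card F ^ c = 0 := by
  have : FiniteDimensional F K := Module.Finite.of_finite
  set φ := FiniteField.frobeniusAlgEquivOfAlgebraic F K
  have hφ (n : ℕ) (x : K) : (φ ^ n) x = x ^ Fintype.card F ^ n := by
    rw [AlgEquiv.coe_pow, FiniteField.coe_frobeniusAlgEquivOfAlgebraic_iterate]
  have hne : φ ^ a ≠ φ ^ c := by
    rwa [Ne, pow_eq_pow_iff_modEq, FiniteField.orderOf_frobeniusAlgEquivOfAlgebraic]
  simpa only [hφ] using sum_apply_mul_apply_eq_zero_of_ne hι hl hb hne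

theorem Nat.not_mul_add_modEq_mul {m s i j : ℕ} (hs : s.Coprime (2 * m)) (hi : i < m)
    (hj : j < m) : ¬ j * s + m ≡ i * s [MOD 2 * m] := by
  intro h
  have hm : j * s ≡ i * s [MOD m] := by
    have := h.of_dvd (Dvd.intro_left 2 rfl)
    rwa [Nat.ModEq, Nat.add_mod_right] at this
  have hij : j = i :=
    (hm.cancel_right_of_coprime (Nat.Coprime.coprime_mul_left_right hs).symm).eq_of_lt_of_lt hj hi
  subst hij
  have hdvd : 2 * m ∣ m :=
    Nat.modEq_zero_iff_dvd.1 (Nat.ModEq.add_left_cancel' (j * s) (by simpa using h))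
  have := Nat.le_of_dvd (by omega) hdvd
  omega

theorem stmt15_general (m k s : ℕ) (hkm : k ≤ m)
    (hcop : Nat.Coprime s (2 * m))
    (F : Type*) [Field F] [Fintype F]
    (K : Type*) [Field K] [Algebra F K]
    (b : Module.Basis (Fin (2 * m)) F K) (l : K) (hl : l ≠ 0)
    (hdual : ∀ i j : Fin (2 * m),
      (∑ r ∈ Finset.range (2 * m), (l * b i * b j) ^ Fintype.card F ^ r)
        = if i = j then 1 else 0)
    (C : Submodule K (Fin (2 * m) → K))
    (hC : C = Submodule.span K
      (Set.range fun i : Fin k => fun t => (b t : K) ^ Fintype.card F ^ (i.val * s))) :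
    C ≤ hermDual (2 * m) (Fintype.card F ^ m) C := by
  have : Module.Finite F K := .of_basis b
  have : Finite K := Module.finite_of_finite F
  have hrank : finrank F K = 2 * m := by simp [finrank_eq_card_basis b]
  have htrace (i j : Fin (2 * m)) :
      Algebra.trace F K (l * b i * b j) = if i = j then 1 else 0 := by
    apply (algebraMap F K).injective
    rw [FiniteField.algebraMap_trace_eq_sum_pow, hrank, Nat.card_eq_fintype_card, hdual]
    split_ifs <;> simp
  let σ := FiniteField.frobeniusAlgEquivOfAlgebraic F K ^ m
  have hσ (x : K) : σ x = x ^ Fintype.card F ^ m := by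
    rw [AlgEquiv.coe_pow, FiniteField.coe_frobeniusAlgEquivOfAlgebraic_iterate]
  subst hC
  refine span_le_hermDual_span σ.toRingHom hσ ?_
  rintro _ ⟨j, rfl⟩ _ ⟨i, rfl⟩
  simp only [← pow_mul, ← pow_add (Fintype.card F)]
  refine FiniteField.sum_pow_mul_pow_eq_zero_of_not_modEq (by simp [hrank]) hl htrace ?_
  rw [hrank]
  exact Nat.not_mul_add_modEq_mul hcop (by omega) (by omega)

/-- if `(α, λ)` is a scaled trace-self-dual basis of `K = F_{q^{2m}}` over
`F_q`, `gcd(s, 2m) = 1`, and `1 ≤ k ≤ m`, then the generalized Gabidulin code `G_{k,s}(α)`,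
spanned by the rows `α^{q^{is}}`, `i = 0,…,k-1`, is Hermitian self-orthogonal. -/
theorem stmt15 (m k s : ℕ) (hm : 1 ≤ m) (hk1 : 1 ≤ k) (hkm : k ≤ m)
    (hs : 0 < s) (hcop : Nat.Coprime s (2 * m))
    (F : Type*) [Field F] [Fintype F]
    (K : Type*) [Field K] [Fintype K] [Algebra F K]
    (hK : Fintype.card K = Fintype.card F ^ (2 * m))
    (b : Module.Basis (Fin (2 * m)) F K) (l : K) (hl : l ≠ 0)
    (hdual : ∀ i j : Fin (2 * m),
      (∑ r ∈ Finset.range (2 * m), (l * b i * b j) ^ Fintype.card F ^ r)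
        = if i = j then 1 else 0)
    (C : Submodule K (Fin (2 * m) → K))
    (hC : C = Submodule.span K
      (Set.range fun i : Fin k => fun t => (b t : K) ^ Fintype.card F ^ (i.val * s))) :
    C ≤ hermDual (2 * m) (Fintype.card F ^ m) C :=
  stmt15_general m k s hkm hcop F K b l hl hdual C hC
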